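/- With T_n as in the preceding context, each T_n is universally axiomatized and has the Amalgamation Property, and every existentially closed model of T_{n+1} is an existentially closed model of T_n. -/

import Mathlib

open FirstOrder FirstOrder.Language

universe u v w

namespace Companion

variable {L : FirstOrder.Language.{u, v}}

/-- An embedding between structures is elementary. -/
def IsElementaryEmb {M N : Type w} [L.Structure M] [L.Structure N] (f : M ↪[L] N) : Prop :=
  ∀ (k : ℕ) (φ : L.Formula (Fin k)) (a : Fin k → M),
    φ.Realize (fun i => f (a i)) ↔ φ.Realize a

/-- A theory is model-complete: every embedding between models is elementary. -/
def ModelComplete (T : L.Theory) : Prop :=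
  ∀ (M N : Theory.ModelType.{u, v, w} T) (f : M ↪[L] N), IsElementaryEmb f

/-- Every model of `T` embeds in a model of `T'`. -/
def MutuallyEmbeddable (T T' : L.Theory) : Prop :=
  (∀ M : Theory.ModelType.{u, v, w} T, ∃ N : Theory.ModelType.{u, v, w} T', Nonempty (M ↪[L] N)) ∧
  (∀ N : Theory.ModelType.{u, v, w} T', ∃ M : Theory.ModelType.{u, v, w} T, Nonempty (N ↪[L] M))

/-- `T'` is a model-companion of `T`: mutual embeddability of models
(equivalently, the same universal consequences) together with model-completeness of `T'`. -/
def IsModelCompanion (T T' : L.Theory) : Prop :=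
  MutuallyEmbeddable.{u, v, w} T T' ∧ ModelComplete.{u, v, w} T'

/-- `M` is an existentially closed model of `T`. -/
def IsECModelOf (T : L.Theory) (M : Type w) [L.Structure M] : Prop :=
  Nonempty M ∧ M ⊨ T ∧
    ∀ (N : Type w) [L.Structure N], N ⊨ T → ∀ (f : M ↪[L] N)
      (k n : ℕ) (φ : L.BoundedFormula (Fin k) n), φ.IsQF →
      ∀ a : Fin k → M, (∃ b : Fin n → N, φ.Realize (fun i => f (a i)) b) →
        ∃ b : Fin n → M, φ.Realize a b

/-- The amalgamation property for models of a theory. -/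
def HasAP (T : L.Theory) : Prop :=
  ∀ (A B C : Theory.ModelType.{u, v, w} T) (f : A ↪[L] B) (g : A ↪[L] C),
    ∃ (D : Theory.ModelType.{u, v, w} T) (h₁ : B ↪[L] D) (h₂ : C ↪[L] D),
      ∀ x, h₁ (f x) = h₂ (g x)

/-- The theory of a class of structures. -/
def classTheory (L : FirstOrder.Language.{u, v}) (C : ∀ (M : Type w) [L.Structure M], Prop) : L.Theory :=
  {φ | ∀ (M : Type w) [L.Structure M] [Nonempty M], C M → M ⊨ φ}

/-- Existentially quantify the last `n` bound variables. -/
def exsN : ∀ {k : ℕ} (n : ℕ), L.BoundedFormula Empty (k + n) → L.BoundedFormula Empty k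
  | _, 0, φ => φ
  | _, n + 1, φ => exsN n φ.ex

/-- A sentence is `∀∃`. -/
def IsAESentence (φ : L.Sentence) : Prop :=
  ∃ (m n : ℕ) (ψ : L.BoundedFormula Empty (m + n)), ψ.IsQF ∧ φ = (exsN n ψ).alls

/-- A theory is (axiomatizable as) `∀∃`. -/
def IsAETheory (T : L.Theory) : Prop :=
  ∃ A : L.Theory, (∀ φ ∈ A, IsAESentence φ) ∧
    ∀ (M : Type w) [L.Structure M] [Nonempty M], M ⊨ T ↔ M ⊨ A

/-- A sentence is universal. -/
def IsUniversalSentence (φ : L.Sentence) : Prop :=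
  ∃ (n : ℕ) (ψ : L.BoundedFormula Empty n), ψ.IsQF ∧ φ = ψ.alls

/-- A theory is universally axiomatized. -/
def IsUniversalTheory (T : L.Theory) : Prop :=
  ∃ A : L.Theory, (∀ φ ∈ A, IsUniversalSentence φ) ∧
    ∀ (M : Type w) [L.Structure M] [Nonempty M], M ⊨ T ↔ M ⊨ A

end Companion

namespace Companion

open FirstOrder FirstOrder.Language

/-- The language with one unary function symbol `f` and constants `c_k`, `k ∈ ω`. -/
def fLang : FirstOrder.Language where
  Functions k := match k with
    | 0 => ℕ
    | 1 => Unit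
    | _ + 2 => Empty
  Relations _ := Empty

variable (M : Type w) [fLang.Structure M]

/-- The interpretation of `f`. -/
def fOp (x : M) : M := Structure.funMap (L := fLang) (n := 1) () ![x]

/-- The interpretation of the constant `c_k`. -/
def cOp (k : ℕ) : M := Structure.funMap (L := fLang) (n := 0) k ![]

/-- The axioms of `T_n`: `f` is injective; there are no cycles; `f x = c_k` forces
`x = c_{k+1}`; `f c_{k+2} = c_{k+1} → f c_{k+1} = c_k`; and `f c_{k+1} = c_k` for `k < n`. -/
def fClass (n : ℕ) : Prop :=
  Function.Injective (fOp M) ∧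
  (∀ (k : ℕ) (x : M), (fOp M)^[k + 1] x ≠ x) ∧
  (∀ (k : ℕ) (x : M), fOp M x = cOp M k → x = cOp M (k + 1)) ∧
  (∀ k : ℕ, fOp M (cOp M (k + 2)) = cOp M (k + 1) → fOp M (cOp M (k + 1)) = cOp M k) ∧
  (∀ k < n, fOp M (cOp M (k + 1)) = cOp M k)

/-- The theory `T_n`. -/
def fTheory (n : ℕ) : fLang.Theory :=
  classTheory.{0, 0, w} fLang (fun M inst => @fClass M inst n)

/-- The sentence `∀x ∃y, f y = x`. -/
def surjSentence : fLang.Sentence :=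
  (Term.bdEqual (Term.func (L := fLang) (l := 1) () ![&1]) &0).ex.all

/-- The carrier of the standard model `A_β`, `β ≤ ω`. -/
def stdCarrier : ℕ∞ → Type
  | ⊤ => ℤ
  | (_ : ℕ) => ℕ × ℕ

/-- The interpretation of `f` in `A_β`. -/
def stdF : ∀ β : ℕ∞, stdCarrier β → stdCarrier β
  | ⊤ => fun z => (show ℤ from z) + 1
  | (_ : ℕ) => fun p => (p.1, p.2 + 1)

/-- The interpretation of `c_k` in `A_β`. -/
def stdC : ∀ β : ℕ∞, ℕ → stdCarrier β
  | ⊤ => fun k => (show ℤ from -(k : ℤ))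
  | (m : ℕ) => fun k => if m < k then (k - m, 0) else (0, m - k)

/-- The successor function on `A_β ⊕ (I × ω) ⊕ (J × ℤ)`. -/
def bigF (β : ℕ∞) (I J : Type) :
    (stdCarrier β ⊕ (I × ℕ) ⊕ (J × ℤ)) → (stdCarrier β ⊕ (I × ℕ) ⊕ (J × ℤ))
  | Sum.inl x => Sum.inl (stdF β x)
  | Sum.inr (Sum.inl (i, n)) => Sum.inr (Sum.inl (i, n + 1))
  | Sum.inr (Sum.inr (j, z)) => Sum.inr (Sum.inr (j, z + 1))

end Companion

/-!
The axioms of `T_n` become universal sentences once "no cycles" is split into one axiom per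
cycle length. To amalgamate `B` and `C` over `A`, glue them along `A` and moreover identify
`x ∈ B` with `y ∈ C` as soon as `f^[k] x` and `f^[k] y` are glued for some `k`: this is the
least identification keeping `f` injective, and the remaining axioms are checked inside the copy
of `B` or of `C` containing a given point. Finally, the axiom `f c_{n+1} = c_n` of `T_{n+1}`
passes to every extension, so a model of `T_n` extending a model of `T_{n+1}` is a model of
`T_{n+1}`.
-/

namespace Companion

open Set

section General

variable {L : FirstOrder.Language.{u, v}}

theorem model_classTheory_iff {C : ∀ (M : Type w) [L.Structure M], Prop} {A : L.Theory}
    (hA : ∀ (M : Type w) [L.Structure M] [Nonempty M], M ⊨ A ↔ C M)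
    (M : Type w) [L.Structure M] [Nonempty M] : M ⊨ classTheory.{u, v, w} L C ↔ C M := by
  refine ⟨fun h => (hA M).1 ((Theory.model_iff A).2 fun φ hφ => h.realize_of_mem φ ?_),
    fun h => (Theory.model_iff _).2 fun φ hφ => hφ M h⟩
  intro N _ _ hN
  exact ((hA N).2 hN).realize_of_mem φ hφ

theorem isUniversalTheory_classTheory {C : ∀ (M : Type w) [L.Structure M], Prop} {A : L.Theory}
    (hAu : ∀ φ ∈ A, IsUniversalSentence φ)
    (hA : ∀ (M : Type w) [L.Structure M] [Nonempty M], M ⊨ A ↔ C M) :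
    IsUniversalTheory.{u, v, w} (classTheory.{u, v, w} L C) :=
  ⟨A, hAu, fun M _ _ => (model_classTheory_iff hA M).trans (hA M).symm⟩

theorem isUniversalSentence_alls {n : ℕ} {ψ : L.BoundedFormula Empty n} (hψ : ψ.IsQF) :
    IsUniversalSentence ψ.alls :=
  ⟨n, ψ, hψ, rfl⟩

theorem IsECModelOf.of_embedding {T T' : L.Theory} {M : Type w} [L.Structure M]
    (hM : IsECModelOf T' M) (hMT : M ⊨ T)
    (hT' : ∀ (N : Type w) [L.Structure N], N ⊨ T → (M ↪[L] N) → N ⊨ T') :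
    IsECModelOf T M := by
  obtain ⟨hne, -, hec⟩ := hM
  exact ⟨hne, hMT, fun N _ hN e => hec N (hT' N hN e) e⟩

end General

section Eventually

variable {X : Type*} (r : Setoid X) {g : X → X} (hg : ∀ ⦃s t⦄, r s t → r (g s) (g t))

include hg in
theorem rel_iterate {s t : X} (h : r s t) (k : ℕ) : r (g^[k] s) (g^[k] t) := by
  induction k with
  | zero => exact h
  | succ k ih => simpa only [Function.iterate_succ_apply'] using hg ih

def eventualSetoid : Setoid X where
  r s t := ∃ k, r (g^[k] s) (g^[k] t)
  iseqv :=
    { refl := fun s => ⟨0, r.refl s⟩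
      symm := fun ⟨k, h⟩ => ⟨k, r.symm h⟩
      trans := fun {s t u} ⟨k, h⟩ ⟨l, h'⟩ => ⟨l + k, by
        have h₁ := rel_iterate r hg h l
        have h₂ := rel_iterate r hg h' k
        simp only [← Function.iterate_add_apply, Nat.add_comm k l] at h₁ h₂
        exact r.trans h₁ h₂⟩ }

theorem eventualSetoid_map_rel_iff {s t : X} :
    eventualSetoid r hg (g s) (g t) ↔ eventualSetoid r hg s t := by
  constructor
  · rintro ⟨k, h⟩
    exact ⟨k + 1, h⟩
  · rintro ⟨k, h⟩
    refine ⟨k, ?_⟩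
    simpa only [← Function.iterate_succ_apply, Function.iterate_succ_apply'] using hg h

end Eventually

section Signature

variable {M N : Type w} [fLang.Structure M] [fLang.Structure N]

theorem funMap_zero (k : fLang.Functions 0) (v : Fin 0 → M) :
    Structure.funMap k v = cOp M k := by
  unfold cOp
  congr 1
  exact Subsingleton.elim _ _

theorem funMap_one (u : fLang.Functions 1) (v : Fin 1 → M) :
    Structure.funMap u v = fOp M (v 0) := by
  unfold fOp
  congr 1
  exact funext fun i => by fin_cases i; rfl

theorem map_cOp (e : M ↪[fLang] N) (k : ℕ) : e (cOp M k) = cOp N k :=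
  (e.map_fun (n := 0) k ![]).trans (funMap_zero _ _)

theorem map_fOp (e : M ↪[fLang] N) (x : M) : e (fOp M x) = fOp N (e x) :=
  (e.map_fun (n := 1) () ![x]).trans (funMap_one _ _)

theorem map_fOp_iterate (e : M ↪[fLang] N) (m : ℕ) (x : M) :
    e ((fOp M)^[m] x) = (fOp N)^[m] (e x) :=
  Function.Semiconj.iterate_right (map_fOp e) m x

theorem fOp_cOp_eq_cOp_iff (e : M ↪[fLang] N) (i j : ℕ) :
    fOp N (cOp N i) = cOp N j ↔ fOp M (cOp M i) = cOp M j := by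
  rw [← map_cOp e, ← map_fOp e, ← map_cOp e, e.injective.eq_iff]

def fEmbedding (e : M → N) (he : Function.Injective e) (hf : ∀ x, e (fOp M x) = fOp N (e x))
    (hc : ∀ k, e (cOp M k) = cOp N k) : M ↪[fLang] N where
  toFun := e
  inj' := he
  map_fun' := by
    intro m u v
    match m, u with
    | 0, k => rw [funMap_zero, funMap_zero]; exact hc k
    | 1, u => rw [funMap_one, funMap_one]; exact hf (v 0)
  map_rel' := fun r => r.elim

theorem fClass.mono {m n : ℕ} (h : fClass M n) (hmn : m ≤ n) : fClass M m :=
  ⟨h.1, h.2.1, h.2.2.1, h.2.2.2.1, fun k hk => h.2.2.2.2 k (hk.trans_le hmn)⟩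

theorem fClass_succ_of_embedding {n : ℕ} (e : M ↪[fLang] N) (hM : fClass M (n + 1))
    (hN : fClass N n) : fClass N (n + 1) :=
  ⟨hN.1, hN.2.1, hN.2.2.1, hN.2.2.2.1,
    fun k hk => (fOp_cOp_eq_cOp_iff e _ _).2 (hM.2.2.2.2 k hk)⟩

theorem iterate_fOp_ne_of_embedding (e : M ↪[fLang] N)
    (hM : ∀ (k : ℕ) (x : M), (fOp M)^[k + 1] x ≠ x) (k : ℕ) (x : M) :
    (fOp N)^[k + 1] (e x) ≠ e x :=
  fun h => hM k x (e.injective ((map_fOp_iterate e _ x).trans h))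

theorem eq_cOp_of_embedding (e : M ↪[fLang] N)
    (hM : ∀ (k : ℕ) (x : M), fOp M x = cOp M k → x = cOp M (k + 1)) {k : ℕ} {x : M}
    (h : fOp N (e x) = cOp N k) : e x = cOp N (k + 1) := by
  rw [← map_fOp, ← map_cOp e] at h
  rw [hM k x (e.injective h), map_cOp]

theorem fClass_of_embeddings_cover {n : ℕ} {M₁ M₂ : Type w} [fLang.Structure M₁]
    [fLang.Structure M₂] (hN : Function.Injective (fOp N)) (e₁ : M₁ ↪[fLang] N)
    (e₂ : M₂ ↪[fLang] N) (hcover : ∀ q, (∃ x, e₁ x = q) ∨ ∃ y, e₂ y = q)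
    (h₁ : fClass M₁ n) (h₂ : fClass M₂ n) : fClass N n := by
  refine ⟨hN, fun k q => ?_, fun k q => ?_, fun k => ?_, fun k hk => ?_⟩
  · rcases hcover q with ⟨x, rfl⟩ | ⟨y, rfl⟩
    exacts [iterate_fOp_ne_of_embedding e₁ h₁.2.1 k x,
      iterate_fOp_ne_of_embedding e₂ h₂.2.1 k y]
  · rcases hcover q with ⟨x, rfl⟩ | ⟨y, rfl⟩
    exacts [eq_cOp_of_embedding e₁ h₁.2.2.1, eq_cOp_of_embedding e₂ h₂.2.2.1]
  · rw [fOp_cOp_eq_cOp_iff e₁, fOp_cOp_eq_cOp_iff e₁]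
    exact h₁.2.2.2.1 k
  · exact (fOp_cOp_eq_cOp_iff e₁ _ _).2 (h₁.2.2.2.2 k hk)

end Signature

section Axioms

variable {α : Type} {M : Type w} [fLang.Structure M]

def cTerm (k : ℕ) : fLang.Term α := Term.func (l := 0) (show fLang.Functions 0 from k) ![]

def fTerm (t : fLang.Term α) : fLang.Term α :=
  Term.func (l := 1) (show fLang.Functions 1 from ()) ![t]

theorem realize_cTerm (v : α → M) (k : ℕ) : (cTerm k).realize v = cOp M k :=
  funMap_zero _ _

theorem realize_fTerm (v : α → M) (t : fLang.Term α) :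
    (fTerm t).realize v = fOp M (t.realize v) :=
  funMap_one _ _

theorem realize_fTerm_iterate (v : α → M) (k : ℕ) (t : fLang.Term α) :
    (fTerm^[k] t).realize v = (fOp M)^[k] (t.realize v) :=
  Function.Semiconj.iterate_right (realize_fTerm v) k t

def injQF : fLang.BoundedFormula Empty 2 :=
  (fTerm &0 =' fTerm &1).imp (&0 =' &1)

def acyclicQF (k : ℕ) : fLang.BoundedFormula Empty 1 :=
  (fTerm^[k + 1] &0 =' &0).not

def predQF (k : ℕ) : fLang.BoundedFormula Empty 1 :=
  (fTerm &0 =' cTerm k).imp (&0 =' cTerm (k + 1))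

def chainQF (k : ℕ) : fLang.BoundedFormula Empty 0 :=
  (fTerm (cTerm (k + 2)) =' cTerm (k + 1)).imp (fTerm (cTerm (k + 1)) =' cTerm k)

def linkQF (k : ℕ) : fLang.BoundedFormula Empty 0 :=
  fTerm (cTerm (k + 1)) =' cTerm k

def fAxioms (n : ℕ) : fLang.Theory :=
  {injQF.alls} ∪ range (fun k => (acyclicQF k).alls) ∪ range (fun k => (predQF k).alls) ∪
    range (fun k => (chainQF k).alls) ∪ (fun k => (linkQF k).alls) '' Iio n

theorem isUniversalSentence_of_mem_fAxioms {n : ℕ} :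
    ∀ φ ∈ fAxioms n, IsUniversalSentence φ := by
  have atomic {m : ℕ} (t₁ t₂ : fLang.Term (Empty ⊕ Fin m)) : (t₁ =' t₂).IsQF :=
    (BoundedFormula.IsAtomic.equal t₁ t₂).isQF
  rintro φ ((((rfl | ⟨k, rfl⟩) | ⟨k, rfl⟩) | ⟨k, rfl⟩) | ⟨k, -, rfl⟩)
  · exact isUniversalSentence_alls ((atomic _ _).imp (atomic _ _))
  · exact isUniversalSentence_alls ((atomic _ _).imp BoundedFormula.IsQF.falsum)
  · exact isUniversalSentence_alls ((atomic _ _).imp (atomic _ _))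
  · exact isUniversalSentence_alls ((atomic _ _).imp (atomic _ _))
  · exact isUniversalSentence_alls (atomic _ _)

theorem model_fAxioms_iff (n : ℕ) : M ⊨ fAxioms n ↔ fClass M n := by
  simp only [fAxioms, Theory.model_union_iff, Theory.model_singleton_iff]
  simp only [Theory.model_iff, forall_mem_range, forall_mem_image, mem_Iio,
    Sentence.Realize, BoundedFormula.realize_alls, injQF, acyclicQF, predQF, chainQF, linkQF,
    BoundedFormula.realize_imp, BoundedFormula.realize_not, BoundedFormula.realize_bdEqual,
    realize_cTerm, realize_fTerm, realize_fTerm_iterate, Function.comp_apply, Term.realize_var,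
    Sum.elim_inr, Fin.forall_fin_succ_pi, Fin.forall_fin_zero_pi, Fin.cons_zero, Fin.cons_one,
    fClass, Function.Injective, and_assoc]

end Axioms

section Amalgamation

variable {A B C : Type w} [fLang.Structure A] [fLang.Structure B] [fLang.Structure C]
  (eB : A ↪[fLang] B) (eC : A ↪[fLang] C)

/-- Identification of `eB a` with `eC a`: the kernel of `B ⊕ C → B ⊔_A C` for sets. -/
def pushoutRel : B ⊕ C → B ⊕ C → Prop
  | .inl x, .inl x' => x = x'
  | .inl x, .inr y => ∃ a, eB a = x ∧ eC a = y
  | .inr y, .inl x => ∃ a, eB a = x ∧ eC a = y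
  | .inr y, .inr y' => y = y'

theorem pushoutRel_equivalence : Equivalence (pushoutRel eB eC) where
  refl s := by cases s <;> rfl
  symm {s t} h := by
    cases s <;> cases t
    all_goals first | exact h | exact h.symm
  trans {s t u} h h' := by
    rcases s with x | y <;> rcases t with x' | y' <;> rcases u with x'' | y''
    all_goals first | exact h.trans h' | exact h ▸ h' | exact h' ▸ h | skip
    · obtain ⟨a, rfl, rfl⟩ := h
      obtain ⟨a', rfl, ha⟩ := h'
      exact congrArg eB (eC.injective ha).symm
    · obtain ⟨a, rfl, rfl⟩ := h
      obtain ⟨a', ha, rfl⟩ := h'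
      exact congrArg eC (eB.injective ha).symm

def pushoutSetoid : Setoid (B ⊕ C) := ⟨pushoutRel eB eC, pushoutRel_equivalence eB eC⟩

abbrev sumStep : B ⊕ C → B ⊕ C := Sum.map (fOp B) (fOp C)

theorem sumStep_iterate_inl (k : ℕ) (x : B) :
    (sumStep (C := C))^[k] (.inl x) = .inl ((fOp B)^[k] x) :=
  (Function.Semiconj.iterate_right (f := Sum.inl) (fun _ => rfl) k x).symm

theorem sumStep_iterate_inr (k : ℕ) (y : C) :
    (sumStep (B := B))^[k] (.inr y) = .inr ((fOp C)^[k] y) :=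
  (Function.Semiconj.iterate_right (f := Sum.inr) (fun _ => rfl) k y).symm

theorem pushoutSetoid_rel_sumStep ⦃s t : B ⊕ C⦄ (h : pushoutSetoid eB eC s t) :
    pushoutSetoid eB eC (sumStep s) (sumStep t) := by
  rcases s with x | y <;> rcases t with x' | y'
  all_goals first | exact congrArg _ h | skip
  all_goals
    obtain ⟨a, rfl, rfl⟩ := h
    exact ⟨fOp A a, map_fOp eB a, map_fOp eC a⟩

def amalgamSetoid : Setoid (B ⊕ C) :=
  eventualSetoid (pushoutSetoid eB eC) (pushoutSetoid_rel_sumStep eB eC)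

def Amalgam : Type w := Quotient (amalgamSetoid eB eC)

variable {eB eC}

theorem amalgam_mk_eq_iff {s t : B ⊕ C} :
    (Quotient.mk _ s : Amalgam eB eC) = Quotient.mk _ t ↔
      ∃ k, pushoutRel eB eC (sumStep^[k] s) (sumStep^[k] t) :=
  Quotient.eq

instance : fLang.Structure (Amalgam eB eC) where
  funMap {m} u v :=
    match m, u with
    | 0, k => Quotient.mk _ (.inl (cOp B k))
    | 1, _ => Quotient.map sumStep (fun _ _ => (eventualSetoid_map_rel_iff _ _).2) (v 0)
  RelMap r := r.elim

theorem fOp_amalgam_injective : Function.Injective (fOp (Amalgam eB eC)) := by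
  refine Quotient.ind₂ fun s t h => Quotient.sound ?_
  exact (eventualSetoid_map_rel_iff _ _).1 (Quotient.exact h)

variable (eB eC)

def amalgamInl (hB : Function.Injective (fOp B)) : B ↪[fLang] Amalgam eB eC :=
  fEmbedding (fun x => Quotient.mk _ (.inl x))
    (fun x x' h => by
      obtain ⟨k, hk⟩ := amalgam_mk_eq_iff.1 h
      simp only [sumStep_iterate_inl] at hk
      exact hB.iterate k hk)
    (fun _ => rfl) (fun _ => rfl)

def amalgamInr (hC : Function.Injective (fOp C)) : C ↪[fLang] Amalgam eB eC :=
  fEmbedding (fun y => Quotient.mk _ (.inr y))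
    (fun y y' h => by
      obtain ⟨k, hk⟩ := amalgam_mk_eq_iff.1 h
      simp only [sumStep_iterate_inr] at hk
      exact hC.iterate k hk)
    (fun _ => rfl)
    (fun k => Quotient.sound ⟨0, cOp A k, map_cOp eB k, map_cOp eC k⟩)

theorem amalgam_condition (hB : Function.Injective (fOp B)) (hC : Function.Injective (fOp C))
    (a : A) : amalgamInl eB eC hB (eB a) = amalgamInr eB eC hC (eC a) :=
  Quotient.sound ⟨0, a, rfl, rfl⟩

theorem amalgamInl_or_amalgamInr (hB : Function.Injective (fOp B))
    (hC : Function.Injective (fOp C)) (q : Amalgam eB eC) :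
    (∃ x, amalgamInl eB eC hB x = q) ∨ ∃ y, amalgamInr eB eC hC y = q := by
  induction q using Quotient.ind with
  | _ s => rcases s with x | y; exacts [.inl ⟨x, rfl⟩, .inr ⟨y, rfl⟩]

end Amalgamation

theorem model_fTheory_iff (n : ℕ) (M : Type w) [fLang.Structure M] [Nonempty M] :
    M ⊨ fTheory.{w} n ↔ fClass M n :=
  model_classTheory_iff (fun _ _ _ => model_fAxioms_iff n) M

theorem hasAP_fTheory (n : ℕ) : HasAP.{0, 0, w} (fTheory.{w} n) := by
  intro A B C eB eC
  have hB := (model_fTheory_iff n B).1 B.is_model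
  have hC := (model_fTheory_iff n C).1 C.is_model
  let ιB := amalgamInl eB eC hB.1
  let ιC := amalgamInr eB eC hC.1
  have : Nonempty (Amalgam eB eC) := ⟨ιB (Classical.arbitrary B)⟩
  have : Amalgam eB eC ⊨ fTheory.{w} n := (model_fTheory_iff n _).2
    (fClass_of_embeddings_cover fOp_amalgam_injective ιB ιC
      (amalgamInl_or_amalgamInr eB eC hB.1 hC.1) hB hC)
  exact ⟨.of (fTheory.{w} n) (Amalgam eB eC), ιB, ιC, amalgam_condition eB eC hB.1 hC.1⟩

/-- Each `T_n` is universally axiomatized and has the amalgamation property,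
and every existentially closed model of `T_{n+1}` is an existentially closed model of
`T_n`. -/
theorem fTheory_universal_AP_ec (n : ℕ) :
    IsUniversalTheory.{0, 0, w} (fTheory.{w} n) ∧
    HasAP.{0, 0, w} (fTheory.{w} n) ∧
    ∀ (M : Type w) [fLang.Structure M],
      IsECModelOf.{0, 0, w} (fTheory.{w} (n + 1)) M →
      IsECModelOf.{0, 0, w} (fTheory.{w} n) M := by
  refine ⟨isUniversalTheory_classTheory isUniversalSentence_of_mem_fAxioms
    (fun _ _ _ => model_fAxioms_iff n), hasAP_fTheory n, fun M _ hM => ?_⟩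
  have := hM.1
  have hM₁ := (model_fTheory_iff (n + 1) M).1 hM.2.1
  refine hM.of_embedding ((model_fTheory_iff n M).2 (hM₁.mono n.le_succ)) fun N _ hN e => ?_
  have : Nonempty N := ⟨e (Classical.arbitrary M)⟩
  exact (model_fTheory_iff (n + 1) N).2
    (fClass_succ_of_embedding e hM₁ ((model_fTheory_iff n N).1 hN))

end Companion
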